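/- arXiv:2510.08563 — 2 statements merged into one kernel-verified Lean document; each statement's English description precedes it below -/
import Mathlib

section
/- Fix Ã ∈ ℝ^{m×n}, b̃ ∈ ℝᵐ and x_0 ∈ ℝⁿ. Let 𝒦(x_0) be the set of pairs (A, b) ∈ ℝ^{m×n} × ℝᵐ such that b ∈ range(A) (Ax = b is consistent) and x_0 − A†b ∈ range(Ãᵀ). For (A, b) ∈ 𝒦(x_0) set r_{A,b} = ‖(Ã − A)A†b − (b̃ − b)‖/σ̃_min. Then the minimum of r_{A,b} over 𝒦(x_0) is attained and equals ‖Ã x̃_LS − b̃‖/σ̃_min, where x̃_LS = Ã†b̃; moreover, every minimizing pair (A, b) satisfies A†b = x̃_LS + x_0ⁿ, where x_0ⁿ is the orthogonal projection of x_0 onto null(Ã). -/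
open Matrix

noncomputable section

namespace RK

/-- The Euclidean inner product on `Fin n → ℝ`. -/
def dot {n : ℕ} (v w : Fin n → ℝ) : ℝ := ∑ i, v i * w i

/-- The squared Euclidean norm on `Fin n → ℝ`. -/
def normSq {n : ℕ} (v : Fin n → ℝ) : ℝ := ∑ i, v i ^ 2

/-- The Euclidean norm on `Fin n → ℝ`. -/
def euclNorm {n : ℕ} (v : Fin n → ℝ) : ℝ := Real.sqrt (normSq v)

/-- The squared Frobenius norm of a matrix. -/
def frobSq {m n : ℕ} (A : Matrix (Fin m) (Fin n) ℝ) : ℝ := ∑ i, ∑ j, A i j ^ 2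

/-- One step of the (randomized) Kaczmarz method for the system `A x ≈ b`, using row `i`:
`x ↦ x - ((aᵢᵀ x - bᵢ) / ‖aᵢ‖²) aᵢ`. -/
def rkStep {m n : ℕ} (A : Matrix (Fin m) (Fin n) ℝ) (b : Fin m → ℝ) (i : Fin m)
    (x : Fin n → ℝ) : Fin n → ℝ :=
  x - ((dot (A i) x - b i) / normSq (A i)) • A i

/-- `rkExp A b x0 k f` is the expectation `𝔼 f(x_k)` of `f` evaluated at the `k`-th iterate of the
randomized Kaczmarz algorithm applied to `A x ≈ b` started at `x0`, where at each step the row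
index `i` is drawn independently at random with probability `‖aᵢ‖² / ‖A‖_F²`. -/
def rkExp {m n : ℕ} (A : Matrix (Fin m) (Fin n) ℝ) (b : Fin m → ℝ) (x0 : Fin n → ℝ) :
    ℕ → ((Fin n → ℝ) → ℝ) → ℝ
  | 0, f => f x0
  | k + 1, f => rkExp A b x0 k fun x => ∑ i, normSq (A i) / frobSq A * f (rkStep A b i x)

/-- The four Penrose conditions: `B` is the Moore–Penrose pseudoinverse of `A`. -/
def IsMoorePenrose {m n : ℕ} (A : Matrix (Fin m) (Fin n) ℝ)
    (B : Matrix (Fin n) (Fin m) ℝ) : Prop :=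
  A * B * A = A ∧ B * A * B = B ∧ (A * B)ᵀ = A * B ∧ (B * A)ᵀ = B * A

/-- The row space `range(Aᵀ)` of a matrix `A`. -/
def rowSpace {m n : ℕ} (A : Matrix (Fin m) (Fin n) ℝ) : Set (Fin n → ℝ) :=
  {v | ∃ u : Fin m → ℝ, v = Aᵀ.mulVec u}

/-- The null space (kernel) of a matrix `A`. -/
def nullSpace {m n : ℕ} (A : Matrix (Fin m) (Fin n) ℝ) : Set (Fin n → ℝ) :=
  {v | A.mulVec v = 0}

/-- `σ` is the smallest nonzero singular value of `A`: `σ > 0`, `σ²` is an eigenvalue of `AᵀA`,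
and `σ²` is less than or equal to every nonzero eigenvalue of `AᵀA`. -/
def IsSmallestNonzeroSingularValue {m n : ℕ} (A : Matrix (Fin m) (Fin n) ℝ) (σ : ℝ) : Prop :=
  0 < σ ∧ (∃ v : Fin n → ℝ, v ≠ 0 ∧ (Aᵀ * A).mulVec v = σ ^ 2 • v) ∧
    ∀ μ : ℝ, μ ≠ 0 → (∃ v : Fin n → ℝ, v ≠ 0 ∧ (Aᵀ * A).mulVec v = μ • v) → σ ^ 2 ≤ μ

lemma normSq_nonneg {n : ℕ} (v : Fin n → ℝ) : 0 ≤ normSq v :=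
  Finset.sum_nonneg fun i _ => sq_nonneg _

lemma normSq_eq_zero {n : ℕ} {v : Fin n → ℝ} (h : normSq v = 0) : v = 0 := by
  funext i
  have := (Finset.sum_eq_zero_iff_of_nonneg (fun i _ => sq_nonneg (v i))).1 h i (Finset.mem_univ i)
  exact pow_eq_zero_iff two_ne_zero |>.1 this

lemma normSq_eq_dot {n : ℕ} (v : Fin n → ℝ) : normSq v = dot v v := by
  simp [normSq, dot, sq]

lemma dot_comm {n : ℕ} (v w : Fin n → ℝ) : dot v w = dot w v := by
  simp [dot, mul_comm]

lemma dot_mulVec_left {m n : ℕ} (M : Matrix (Fin m) (Fin n) ℝ) (v : Fin n → ℝ) (w : Fin m → ℝ) :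
    dot (M.mulVec v) w = dot v (Mᵀ.mulVec w) := by
  simp only [dot, Matrix.mulVec, dotProduct, Finset.sum_mul, Finset.mul_sum,
    Matrix.transpose_apply]
  rw [Finset.sum_comm]
  exact Finset.sum_congr rfl fun i _ => Finset.sum_congr rfl fun j _ => by ring

lemma normSq_add {n : ℕ} (a c : Fin n → ℝ) :
    normSq (a + c) = normSq a + 2 * dot a c + normSq c := by
  simp only [normSq, dot, Pi.add_apply, Finset.mul_sum]
  rw [← Finset.sum_add_distrib, ← Finset.sum_add_distrib]
  exact Finset.sum_congr rfl fun i _ => by ring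



lemma pinv_mem_rowSpace {m n : ℕ} {At : Matrix (Fin m) (Fin n) ℝ}
    {Atp : Matrix (Fin n) (Fin m) ℝ} (h : IsMoorePenrose At Atp) (bt : Fin m → ℝ) :
    Atp.mulVec bt ∈ rowSpace At := by
  refine ⟨Atpᵀ.mulVec (Atp.mulVec bt), ?_⟩
  rw [Matrix.mulVec_mulVec, ← Matrix.transpose_mul, h.2.2.2, Matrix.mulVec_mulVec,
    h.2.1]

lemma rowSpace_sub {m n : ℕ} {At : Matrix (Fin m) (Fin n) ℝ} {v w : Fin n → ℝ}
    (hv : v ∈ rowSpace At) (hw : w ∈ rowSpace At) : v - w ∈ rowSpace At := by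
  obtain ⟨u, rfl⟩ := hv; obtain ⟨u', rfl⟩ := hw
  exact ⟨u - u', by rw [Matrix.mulVec_sub]⟩

lemma rowSpace_inter_null {m n : ℕ} {At : Matrix (Fin m) (Fin n) ℝ} {p : Fin n → ℝ}
    (hr : p ∈ rowSpace At) (hn : At.mulVec p = 0) : p = 0 := by
  obtain ⟨u, hu⟩ := hr
  apply normSq_eq_zero
  rw [normSq_eq_dot]
  nth_rewrite 1 [hu]
  rw [dot_mulVec_left, Matrix.transpose_transpose, hn]
  simp [dot]

lemma key_pythag {m n : ℕ} {At : Matrix (Fin m) (Fin n) ℝ} {Atp : Matrix (Fin n) (Fin m) ℝ}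
    (hAtp : IsMoorePenrose At Atp) (bt : Fin m → ℝ) (y : Fin n → ℝ) :
    normSq (At.mulVec y - bt) =
      normSq (At.mulVec (Atp.mulVec bt) - bt) + normSq (At.mulVec (y - Atp.mulVec bt)) := by
  set x := Atp.mulVec bt with hx
  have h1 : Atᵀ * (At * Atp) = Atᵀ := by
    rw [← hAtp.2.2.1, ← Matrix.transpose_mul, hAtp.1]
  have h2 : Atᵀ.mulVec (At.mulVec x - bt) = 0 := by
    rw [Matrix.mulVec_sub, hx, Matrix.mulVec_mulVec, Matrix.mulVec_mulVec,
      Matrix.mul_assoc Atᵀ At Atp, h1, sub_self]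
  have horth : dot (At.mulVec x - bt) (At.mulVec (y - x)) = 0 := by
    rw [dot_comm, dot_mulVec_left, h2]
    simp [dot]
  have hsplit : At.mulVec y - bt = (At.mulVec x - bt) + At.mulVec (y - x) := by
    rw [Matrix.mulVec_sub]; abel
  rw [hsplit, normSq_add, horth]; ring



lemma normSq_pos {n : ℕ} {v : Fin n → ℝ} (hv : v ≠ 0) : 0 < normSq v :=
  lt_of_le_of_ne (normSq_nonneg v) fun h => hv (normSq_eq_zero h.symm)

lemma rank_one_pinv {m n : ℕ} [NeZero m] (y0 : Fin n → ℝ) :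
    ∃ (A : Matrix (Fin m) (Fin n) ℝ) (b : Fin m → ℝ) (Ap : Matrix (Fin n) (Fin m) ℝ),
      IsMoorePenrose A Ap ∧ (∃ x, A.mulVec x = b) ∧ Ap.mulVec b = y0 := by
  by_cases hy : y0 = 0
  · exact ⟨0, 0, 0, ⟨by simp, by simp, by simp, by simp⟩, ⟨0, by simp⟩, by simp [hy]⟩
  · have hs : normSq y0 ≠ 0 := ne_of_gt (normSq_pos hy)
    set s := normSq y0 with hsdef
    have hsum : ∑ l, y0 l * (y0 l / s) = 1 := by
      have : ∑ l, y0 l * (y0 l / s) = (∑ l, y0 l ^ 2) / s := by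
        rw [Finset.sum_div]; exact Finset.sum_congr rfl fun l _ => by ring
      rw [this, ← normSq, ← hsdef, div_self hs]
    refine ⟨Matrix.of fun i j => if i = 0 then y0 j else 0,
      fun i => if i = 0 then s else 0,
      Matrix.of fun j i => if i = 0 then y0 j / s else 0, ⟨?_, ?_, ?_, ?_⟩, ⟨y0, ?_⟩, ?_⟩
    · ext i l
      simp [Matrix.mul_apply, ite_mul, mul_ite, Finset.sum_ite_eq, Finset.sum_ite_eq', hsum]
    · ext j k
      simp [Matrix.mul_apply, ite_mul, mul_ite, Finset.sum_ite_eq, Finset.sum_ite_eq']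
      simp only [mul_assoc, ← Finset.mul_sum, hsum, mul_one]
    · ext i k
      simp [Matrix.mul_apply, ite_mul, mul_ite, Finset.sum_ite_eq, Finset.sum_ite_eq']
      split_ifs <;> rfl
    · ext j l
      simp [Matrix.mul_apply, ite_mul, mul_ite, Finset.sum_ite_eq, Finset.sum_ite_eq']
      ring
    · funext i
      simp [Matrix.mulVec, dotProduct, ite_mul, hsdef, normSq, sq]
    · funext j
      simp [Matrix.mulVec, dotProduct, mul_ite, Finset.sum_ite_eq', div_mul_cancel₀ _ hs]



/-- **Corollary 4.2.** Over all consistent pairs `(A, b)` with `x₀ − A†b ∈ range(Ãᵀ)`, the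
radius `r_{A,b} = ‖(Ã − A)A†b − (b̃ − b)‖ / σ̃_min` attains the minimum value
`‖Ã x̃_LS − b̃‖ / σ̃_min` (where `x̃_LS = Ã†b̃`), and every minimizing pair satisfies
`A†b = x̃_LS + x₀ⁿ`. -/
theorem smallest_ball_center {m n : ℕ}
    (At : Matrix (Fin m) (Fin n) ℝ) (bt : Fin m → ℝ)
    (σmin : ℝ) (hσ : IsSmallestNonzeroSingularValue At σmin)
    (Atp : Matrix (Fin n) (Fin m) ℝ) (hAtp : IsMoorePenrose At Atp)
    (x0 x0r x0n : Fin n → ℝ)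
    (hx0r : x0r ∈ rowSpace At) (hx0n : x0n ∈ nullSpace At) (hx0 : x0 = x0r + x0n) :
    (∃ (A : Matrix (Fin m) (Fin n) ℝ) (b : Fin m → ℝ) (Ap : Matrix (Fin n) (Fin m) ℝ),
        IsMoorePenrose A Ap ∧ (∃ x, A.mulVec x = b) ∧ x0 - Ap.mulVec b ∈ rowSpace At ∧
        euclNorm ((At - A).mulVec (Ap.mulVec b) - (bt - b)) / σmin =
          euclNorm (At.mulVec (Atp.mulVec bt) - bt) / σmin) ∧
    (∀ (A : Matrix (Fin m) (Fin n) ℝ) (b : Fin m → ℝ) (Ap : Matrix (Fin n) (Fin m) ℝ),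
        IsMoorePenrose A Ap → (∃ x, A.mulVec x = b) → x0 - Ap.mulVec b ∈ rowSpace At →
        euclNorm (At.mulVec (Atp.mulVec bt) - bt) / σmin ≤
          euclNorm ((At - A).mulVec (Ap.mulVec b) - (bt - b)) / σmin) ∧
    (∀ (A : Matrix (Fin m) (Fin n) ℝ) (b : Fin m → ℝ) (Ap : Matrix (Fin n) (Fin m) ℝ),
        IsMoorePenrose A Ap → (∃ x, A.mulVec x = b) → x0 - Ap.mulVec b ∈ rowSpace At →
        euclNorm ((At - A).mulVec (Ap.mulVec b) - (bt - b)) / σmin =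
          euclNorm (At.mulVec (Atp.mulVec bt) - bt) / σmin →
        Ap.mulVec b = Atp.mulVec bt + x0n) := by
  obtain ⟨hσpos, ⟨v, hv, hev⟩, -⟩ := hσ
  have hσne : σmin ≠ 0 := ne_of_gt hσpos
  haveI : NeZero m := by
    constructor; rintro rfl
    have hz : (Atᵀ * At) = 0 := by ext i j; simp [Matrix.mul_apply]
    rw [hz, Matrix.zero_mulVec] at hev
    rcases smul_eq_zero.1 hev.symm with h | h
    · exact absurd h (by positivity)
    · exact hv h
  set xt := Atp.mulVec bt with hxt
  have hx0nAt : At.mulVec x0n = 0 := hx0n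
  have hred : ∀ (A : Matrix (Fin m) (Fin n) ℝ) (b : Fin m → ℝ) (Ap : Matrix (Fin n) (Fin m) ℝ),
      IsMoorePenrose A Ap → (∃ x, A.mulVec x = b) →
      (At - A).mulVec (Ap.mulVec b) - (bt - b) = At.mulVec (Ap.mulVec b) - bt := by
    rintro A b Ap hAp ⟨x, hx⟩
    have hb : A.mulVec (Ap.mulVec b) = b := by
      rw [← hx, Matrix.mulVec_mulVec, Matrix.mulVec_mulVec, hAp.1]
    rw [Matrix.sub_mulVec, hb]; abel
  refine ⟨?_, ?_, ?_⟩
  · obtain ⟨A, b, Ap, hAp, hcons, hApb⟩ := rank_one_pinv (m := m) (xt + x0n)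
    refine ⟨A, b, Ap, hAp, hcons, ?_, ?_⟩
    · rw [hApb, hx0]
      have h1 : x0r + x0n - (xt + x0n) = x0r - xt := by abel
      rw [h1]
      exact rowSpace_sub hx0r (pinv_mem_rowSpace hAtp bt)
    · rw [hred A b Ap hAp hcons, hApb]
      have h2 : At.mulVec (xt + x0n) = At.mulVec xt := by
        rw [Matrix.mulVec_add, hx0nAt, add_zero]
      rw [h2]
  · intro A b Ap hAp hcons hrow
    rw [hred A b Ap hAp hcons]
    gcongr
    apply Real.sqrt_le_sqrt
    rw [key_pythag hAtp bt (Ap.mulVec b)]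
    have := normSq_nonneg (At.mulVec (Ap.mulVec b - xt))
    linarith
  · intro A b Ap hAp hcons hrow heq
    rw [hred A b Ap hAp hcons] at heq
    set y := Ap.mulVec b with hy
    have hnorm : euclNorm (At.mulVec y - bt) = euclNorm (At.mulVec xt - bt) := by
      field_simp [hσne] at heq; exact heq
    have h1 : normSq (At.mulVec y - bt) = normSq (At.mulVec xt - bt) :=
      (Real.sqrt_inj (normSq_nonneg _) (normSq_nonneg _)).1 hnorm
    have h2 := key_pythag hAtp bt y
    have hne : normSq (At.mulVec (y - xt)) = 0 := by linarith
    have hnull : At.mulVec (y - xt) = 0 := normSq_eq_zero hne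
    obtain ⟨u, hu⟩ := hrow
    have hyeq : y = x0r + x0n - Atᵀ.mulVec u := by
      have : y = x0 - Atᵀ.mulVec u := by
        rw [← hu]; abel
      rw [this, hx0]
    have hp : y - xt - x0n = 0 := by
      apply rowSpace_inter_null (At := At)
      · have h3 : y - xt - x0n = (x0r - Atᵀ.mulVec u) - xt := by rw [hyeq]; abel
        rw [h3]
        exact rowSpace_sub (rowSpace_sub hx0r ⟨u, rfl⟩) (pinv_mem_rowSpace hAtp bt)
      · rw [Matrix.mulVec_sub, Matrix.mulVec_sub, hx0nAt, sub_zero]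
        rw [← Matrix.mulVec_sub, hnull]
    have h4 : y - (xt + x0n) = 0 := by rw [← sub_sub]; exact hp
    rw [sub_eq_zero] at h4
    exact h4

end RK
end
end

section
/- Let A ∈ ℝ^{m×n} have full column rank and all rows nonzero, let b ∈ range(A), and let {x_k} be the RK iterates for the consistent system Ax = b with arbitrary initial point x_0 ∈ ℝⁿ. Let x_LS = A†b, and for j = 1,…,n let v_j be the j-th right singular vector of A with singular value σ_j (a unit vector with AᵀA v_j = σ_j² v_j). Then for every k ≥ 0 and every j: 𝔼⟨x_k − x_LS, v_j⟩ = (1 − σ_j²/‖A‖_F²)^k ⟨x_0 − x_LS, v_j⟩. -/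
open Matrix

noncomputable section

namespace RK

lemma dot_eq_dotProduct {n : ℕ} (v w : Fin n → ℝ) : dot v w = v ⬝ᵥ w := rfl

lemma dot_sub_smul {n : ℕ} (e w v : Fin n → ℝ) (c : ℝ) :
    dot (e - c • w) v = dot e v - c * dot w v := by
  simp [dot, sub_mul, Finset.sum_sub_distrib, Finset.mul_sum, mul_assoc]

lemma normSq_ne_zero {n : ℕ} {w : Fin n → ℝ} (hw : w ≠ 0) : normSq w ≠ 0 := by
  intro h
  apply hw
  funext j
  have h0 : ∀ i ∈ Finset.univ, (0:ℝ) ≤ w i ^ 2 := fun i _ => sq_nonneg _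
  have := (Finset.sum_eq_zero_iff_of_nonneg h0).1 h j (Finset.mem_univ j)
  simpa [pow_eq_zero_iff] using this

lemma rkExp_const_mul {m n : ℕ} (A : Matrix (Fin m) (Fin n) ℝ) (b : Fin m → ℝ)
    (x0 : Fin n → ℝ) (k : ℕ) (c : ℝ) (f : (Fin n → ℝ) → ℝ) :
    rkExp A b x0 k (fun x => c * f x) = c * rkExp A b x0 k f := by
  induction k generalizing f with
  | zero => rfl
  | succ k ih =>
    show rkExp A b x0 k _ = c * rkExp A b x0 k _
    rw [← ih]
    congr 1
    funext x
    rw [Finset.mul_sum]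
    exact Finset.sum_congr rfl fun i _ => by ring

lemma spectral_sum {m n : ℕ} (A : Matrix (Fin m) (Fin n) ℝ) (σj : ℝ) (v : Fin n → ℝ)
    (hev : (Aᵀ * A).mulVec v = σj ^ 2 • v) (e : Fin n → ℝ) :
    ∑ i, dot (A i) e * dot (A i) v = σj ^ 2 * dot e v := by
  have h1 : ∑ i, dot (A i) e * dot (A i) v = (A.mulVec e) ⬝ᵥ (A.mulVec v) := by
    refine Finset.sum_congr rfl fun i _ => ?_
    rfl
  rw [h1, dotProduct_comm, dotProduct_mulVec, ← mulVec_transpose, mulVec_mulVec, hev]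
  rw [smul_dotProduct, dotProduct_comm]
  simp [dot_eq_dotProduct, smul_eq_mul]

lemma frobSq_eq_sum_normSq {m n : ℕ} (A : Matrix (Fin m) (Fin n) ℝ) :
    frobSq A = ∑ i, normSq (A i) := rfl

lemma frobSq_pos {m n : ℕ} {A : Matrix (Fin m) (Fin n) ℝ} (hA : A ≠ 0) : 0 < frobSq A := by
  have : ∃ i j, A i j ≠ 0 := by
    by_contra h
    push_neg at h
    exact hA (by ext i j; simpa using h i j)
  obtain ⟨i, j, hij⟩ := this
  have h1 : 0 < normSq (A i) := by
    refine Finset.sum_pos' (fun l _ => sq_nonneg _) ⟨j, Finset.mem_univ j, ?_⟩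
    positivity
  rw [frobSq_eq_sum_normSq]
  exact Finset.sum_pos' (fun l _ => Finset.sum_nonneg fun _ _ => sq_nonneg _)
    ⟨i, Finset.mem_univ i, h1⟩

/-- **Theorem 3.1 (Steinerberger).** For a consistent system `Ax = b` with `A` of full column
rank, `x_LS = A†b`, and any right singular vector `vⱼ` of `A` with singular value `σⱼ`, the RK
iterates from any `x₀` satisfy
`𝔼⟨x_k − x_LS, vⱼ⟩ = (1 − σⱼ²/‖A‖_F²)^k ⟨x₀ − x_LS, vⱼ⟩`. -/
theorem rk_steinerberger {m n : ℕ}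
    (A : Matrix (Fin m) (Fin n) ℝ) (b : Fin m → ℝ)
    (hA : A ≠ 0) (hrows : ∀ i, A i ≠ 0)
    (hrank : ∀ v : Fin n → ℝ, A.mulVec v = 0 → v = 0)
    (hcons : ∃ x, A.mulVec x = b)
    (Ap : Matrix (Fin n) (Fin m) ℝ) (hAp : IsMoorePenrose A Ap)
    (σj : ℝ) (hσj : 0 ≤ σj) (v : Fin n → ℝ) (hv : normSq v = 1)
    (hev : (Aᵀ * A).mulVec v = σj ^ 2 • v)
    (x0 : Fin n → ℝ) (k : ℕ) :
    rkExp A b x0 k (fun y => dot (y - Ap.mulVec b) v) =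
      (1 - σj ^ 2 / frobSq A) ^ k * dot (x0 - Ap.mulVec b) v := by
  set xLS := Ap.mulVec b with hxLS
  have hF : frobSq A ≠ 0 := ne_of_gt (frobSq_pos hA)
  -- the least-squares point solves the system
  have hsol : A.mulVec xLS = b := by
    obtain ⟨x, hx⟩ := hcons
    rw [hxLS, ← hx, mulVec_mulVec, mulVec_mulVec, hAp.1]
  have hb : ∀ i, b i = dot (A i) xLS := fun i => by
    rw [← hsol]; rfl
  -- one-step expectation identity
  have hstep : ∀ x : Fin n → ℝ,
      ∑ i, normSq (A i) / frobSq A * dot (rkStep A b i x - xLS) v =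
        (1 - σj ^ 2 / frobSq A) * dot (x - xLS) v := by
    intro x
    have hterm : ∀ i, normSq (A i) / frobSq A * dot (rkStep A b i x - xLS) v =
        normSq (A i) / frobSq A * dot (x - xLS) v -
          (1 / frobSq A) * (dot (A i) (x - xLS) * dot (A i) v) := by
      intro i
      have hdi : dot (A i) x - b i = dot (A i) (x - xLS) := by
        rw [hb i]
        simp [dot, sub_mul, Finset.sum_sub_distrib, mul_sub]
      have hre : rkStep A b i x - xLS =
          (x - xLS) - (dot (A i) (x - xLS) / normSq (A i)) • A i := by
        rw [rkStep, hdi]; abel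
      rw [hre, dot_sub_smul]
      have hni : normSq (A i) ≠ 0 := normSq_ne_zero (hrows i)
      field_simp
    rw [Finset.sum_congr rfl fun i _ => hterm i, Finset.sum_sub_distrib,
      ← Finset.sum_mul, ← Finset.mul_sum, spectral_sum A σj v hev (x - xLS),
      ← Finset.sum_div, ← frobSq_eq_sum_normSq, div_self hF]
    field_simp
  induction k with
  | zero => simp [rkExp]
  | succ k ih =>
    show rkExp A b x0 k _ = _
    have : (fun x => ∑ i, normSq (A i) / frobSq A * dot (rkStep A b i x - xLS) v) =
        fun x => (1 - σj ^ 2 / frobSq A) * dot (x - xLS) v := funext hstep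
    rw [this, rkExp_const_mul, ih, pow_succ]
    ring

end RK
end
end
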